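/- arXiv:1103.5155 — 2 statements merged into one kernel-verified Lean document; each statement's English description precedes it below -/
import Mathlib

section
/- For every n ≥ 1 and every natural number d, the integer ∑_{m | n} μ(m) d^{n/m} is divisible by n; that is, the Witt function χ_n(d) is a nonnegative integer. -/
/-!
Fix a prime power `p ^ (k + 1)` dividing `n`. Since `μ` vanishes off squarefree numbers, the
divisors that contribute pair up as `m`, `p * m` with `p ∤ m`, and writing `n = p ^ (k + 1) * m * t`
the pair contributes `μ m * (b ^ (p ^ (k + 1)) - b ^ (p ^ k))` with `b = d ^ t`. Fermat's little
theorem `p ∣ b ^ p - b`, lifted along `p`-th powers, makes this divisible by `p ^ (k + 1)`; as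
`n` is the lcm of its prime-power divisors, `n` divides the sum.

For nonnegativity with `d ≥ 2`, the term `d ^ n` of `m = 1` outweighs the others, which are at
most the geometric sum `∑ d ^ k < d ^ n` over the proper divisors `k` of `n`. For `d = 1` the sum
is `∑_{m ∣ n} μ m ∈ {0, 1}`, and for `d = 0` every term vanishes.
-/

/-- The Witt function `χ_n(d) = (1/n) ∑_{m ∣ n} μ(m) d^(n/m)`. -/
noncomputable def wittInt (n d : ℕ) : ℤ :=
  (∑ m ∈ n.divisors, (ArithmeticFunction.moebius m) * (d : ℤ) ^ (n / m)) / n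

open ArithmeticFunction Finset
open scoped ArithmeticFunction.Moebius

theorem Int.prime_pow_succ_dvd_pow_sub_pow {p : ℕ} (hp : p.Prime) (k t : ℕ) (a : ℤ) :
    (p : ℤ) ^ (k + 1) ∣ a ^ (p ^ (k + 1) * t) - a ^ (p ^ k * t) := by
  have h := dvd_sub_pow_of_dvd_sub (Int.prime_dvd_pow_self_sub hp (a ^ t)) k
  rw [← pow_mul, ← pow_mul, ← pow_mul] at h
  rwa [show p ^ (k + 1) * t = t * (p * p ^ k) by ring, mul_comm (p ^ k) t]

theorem moebius_mul_prime_of_not_dvd {p m : ℕ} (hp : p.Prime) (hpm : ¬p ∣ m) :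
    μ (p * m) = -μ m := by
  rw [isMultiplicative_moebius.map_mul_of_coprime ((Nat.Prime.coprime_iff_not_dvd hp).2 hpm),
    moebius_apply_prime hp, neg_one_mul]

theorem sum_divisors_moebius_mul_eq_sum_not_dvd {p n : ℕ} (hp : p.Prime) (hpn : p ∣ n)
    (g : ℕ → ℤ) :
    ∑ m ∈ n.divisors, μ m * g m = ∑ m ∈ n.divisors with ¬p ∣ m, μ m * (g m - g (p * m)) := by
  have hshift : ∑ m ∈ n.divisors with ¬p ∣ m, μ (p * m) * g (p * m) =
      ∑ m ∈ n.divisors with p ∣ m, μ m * g m := by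
    refine sum_bij_ne_zero (fun m _ _ ↦ p * m) ?_ ?_ ?_ (fun _ _ _ ↦ rfl)
    · intro m hm _
      simp only [mem_filter, Nat.mem_divisors] at hm ⊢
      exact ⟨⟨((Nat.Prime.coprime_iff_not_dvd hp).2 hm.2).mul_dvd_of_dvd_of_dvd hpn hm.1.1,
        hm.1.2⟩, dvd_mul_right p m⟩
    · intro a _ _ b _ _ h
      exact Nat.eq_of_mul_eq_mul_left hp.pos h
    · -- a multiple `b = p * c` of `p` with `μ b ≠ 0` is squarefree, so `p ∤ c`
      intro b hb hb0
      simp only [mem_filter, Nat.mem_divisors] at hb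
      obtain ⟨⟨hbn, hn⟩, c, rfl⟩ := hb
      have hsq : Squarefree (p * c) := by
        by_contra h
        exact hb0 (by rw [moebius_eq_zero_of_not_squarefree h, zero_mul])
      have hpc : ¬p ∣ c := fun ⟨e, he⟩ ↦ hp.one_lt.ne' <|
        Nat.isUnit_iff.mp (hsq p ⟨e, by rw [he, mul_assoc]⟩)
      refine ⟨c, ?_, ?_, rfl⟩
      · simp only [mem_filter, Nat.mem_divisors]
        exact ⟨⟨(dvd_mul_left c p).trans hbn, hn⟩, hpc⟩
      · simpa using hb0
  rw [← sum_filter_not_add_sum_filter _ (p ∣ ·), ← hshift, ← sum_add_distrib]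
  refine sum_congr rfl fun m hm ↦ ?_
  rw [moebius_mul_prime_of_not_dvd hp (mem_filter.mp hm).2]
  ring

theorem prime_pow_dvd_sum_moebius_mul_pow {p k n : ℕ} (hp : p.Prime) (hpk : p ^ k ∣ n) (a : ℤ) :
    (p : ℤ) ^ k ∣ ∑ m ∈ n.divisors, μ m * a ^ (n / m) := by
  obtain _ | k := k
  · simp
  rw [sum_divisors_moebius_mul_eq_sum_not_dvd hp ((dvd_pow_self p k.succ_ne_zero).trans hpk)]
  refine dvd_sum fun m hm ↦ dvd_mul_of_dvd_right ?_ _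
  simp only [mem_filter, Nat.mem_divisors] at hm
  obtain ⟨⟨hmn, hn⟩, hpm⟩ := hm
  have hm0 : 0 < m := Nat.pos_of_dvd_of_pos hmn (Nat.pos_of_ne_zero hn)
  have hcop : (p ^ (k + 1)).Coprime m := ((Nat.Prime.coprime_iff_not_dvd hp).2 hpm).pow_left _
  obtain ⟨t, rfl⟩ := hcop.mul_dvd_of_dvd_of_dvd hpk hmn
  have hnm : p ^ (k + 1) * m * t / m = p ^ (k + 1) * t :=
    Nat.div_eq_of_eq_mul_left hm0 (by ring)
  have hnpm : p ^ (k + 1) * m * t / (p * m) = p ^ k * t :=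
    Nat.div_eq_of_eq_mul_left (Nat.mul_pos hp.pos hm0) (by ring)
  rw [hnm, hnpm]
  exact Int.prime_pow_succ_dvd_pow_sub_pow hp k t a

theorem dvd_sum_moebius_mul_pow (n : ℕ) (a : ℤ) :
    (n : ℤ) ∣ ∑ m ∈ n.divisors, μ m * a ^ (n / m) := by
  rw [Int.natCast_dvd, Nat.dvd_iff_prime_pow_dvd_dvd]
  intro p k hp hpk
  exact Int.natCast_dvd.mp (by exact_mod_cast prime_pow_dvd_sum_moebius_mul_pow hp hpk a)

theorem sum_properDivisors_pow_le {d : ℕ} (hd : d ≠ 1) (n : ℕ) :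
    ∑ k ∈ n.properDivisors, d ^ k ≤ d ^ n := by
  obtain rfl | hd0 := Nat.eq_zero_or_pos d
  · refine (sum_eq_zero fun k hk ↦ zero_pow ?_).trans_le (Nat.zero_le _)
    exact (Nat.pos_of_mem_properDivisors hk).ne'
  exact (Nat.geomSum_lt (by omega) fun k hk ↦ (Nat.mem_properDivisors.mp hk).2).le

theorem sum_moebius_mul_pow_eq_sum_properDivisors {n : ℕ} (hn : n ≠ 0) (a : ℤ) :
    ∑ m ∈ n.divisors, μ m * a ^ (n / m) = a ^ n + ∑ k ∈ n.properDivisors, μ (n / k) * a ^ k := by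
  have hflip : ∑ m ∈ n.divisors, μ m * a ^ (n / m) = ∑ k ∈ n.divisors, μ (n / k) * a ^ k := by
    rw [← Nat.sum_div_divisors n (fun k ↦ μ (n / k) * a ^ k)]
    exact sum_congr rfl fun m hm ↦ by rw [Nat.div_div_self (Nat.dvd_of_mem_divisors hm) hn]
  rw [hflip, ← Nat.cons_self_properDivisors hn, sum_cons, Nat.div_self (Nat.pos_of_ne_zero hn),
    moebius_apply_one, one_mul]

theorem sum_moebius_mul_pow_nonneg (n d : ℕ) :
    0 ≤ ∑ m ∈ n.divisors, μ m * (d : ℤ) ^ (n / m) := by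
  obtain rfl | hn := eq_or_ne n 0
  · simp
  obtain rfl | hd := eq_or_ne d 1
  · simp only [Nat.cast_one, one_pow, mul_one]
    rw [← coe_mul_zeta_apply, moebius_mul_coe_zeta, one_apply]
    split_ifs <;> norm_num
  have hle : ∑ k ∈ n.properDivisors, (d : ℤ) ^ k ≤ (d : ℤ) ^ n := by
    exact_mod_cast sum_properDivisors_pow_le hd n
  have hterm (k : ℕ) : -((d : ℤ) ^ k) ≤ μ (n / k) * (d : ℤ) ^ k := by
    rw [← neg_one_mul]
    exact mul_le_mul_of_nonneg_right (neg_le_of_abs_le abs_moebius_le_one) (by positivity)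
  calc 0 ≤ (d : ℤ) ^ n + ∑ k ∈ n.properDivisors, -((d : ℤ) ^ k) := by
        rw [sum_neg_distrib]; linarith
    _ ≤ (d : ℤ) ^ n + ∑ k ∈ n.properDivisors, μ (n / k) * (d : ℤ) ^ k := by
        gcongr with k; exact hterm k
    _ = ∑ m ∈ n.divisors, μ m * (d : ℤ) ^ (n / m) :=
        (sum_moebius_mul_pow_eq_sum_properDivisors hn d).symm

theorem witt_int_valued_general (n d : ℕ) :
    (n : ℤ) ∣ ∑ m ∈ n.divisors, (ArithmeticFunction.moebius m) * (d : ℤ) ^ (n / m) ∧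
    0 ≤ wittInt n d :=
  ⟨dvd_sum_moebius_mul_pow n d,
    Int.ediv_nonneg (sum_moebius_mul_pow_nonneg n d) (Int.natCast_nonneg n)⟩

theorem witt_int_valued (n d : ℕ) (hn : 1 ≤ n) :
    (n : ℤ) ∣ ∑ m ∈ n.divisors, (ArithmeticFunction.moebius m) * (d : ℤ) ^ (n / m) ∧
    0 ≤ wittInt n d :=
  witt_int_valued_general n d
end

section
/- If F is a free group freely generated by a set X and π = ∏_{i=1}^{t}(c_i+1), then the iterated lower central subgroup ρ_t(F) = γ_{c_t+1}(γ_{c_{t−1}+1}(...(γ_{c_1+1}(F))...)) is contained in γ_π(F). -/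
/-- `γ_{c+1}(H)` of a subgroup `H ≤ F`, viewed as a subgroup of `F`. -/
def gammaOf {F : Type*} [Group F] (H : Subgroup F) (c : ℕ) : Subgroup F :=
  ((⊤ : Subgroup H).lowerCentralSeries c).map H.subtype

/-- The iterated lower central subgroup
`ρ_t(F) = γ_{c_t+1}(γ_{c_{t-1}+1}(⋯(γ_{c_1+1}(F))⋯))` for the class row `cs = [c_1,…,c_t]`. -/
def rho (F : Type*) [Group F] (cs : List ℕ) : Subgroup F :=
  cs.foldl (fun H c => gammaOf H c) ⊤

/-!
By the three subgroups lemma, `⁅γ_i(G), γ_j(G)⁆ ≤ γ_{i+j}(G)`, so if `H ≤ γ_k(G)` then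
every `(c+1)`-fold commutator of elements of `H` lies in `γ_{k(c+1)}(G)`. Iterating over the list multiplies the indices.
-/

namespace Subgroup

variable {G : Type*} [Group G]

theorem commutator_commutator_le_of_rotate {H₁ H₂ H₃ N : Subgroup G} [N.Normal]
    (h1 : ⁅⁅H₂, H₃⁆, H₁⁆ ≤ N) (h2 : ⁅⁅H₃, H₁⁆, H₂⁆ ≤ N) : ⁅⁅H₁, H₂⁆, H₃⁆ ≤ N := by
  have hquot : ∀ A B C : Subgroup G, ⁅⁅A, B⁆, C⁆ ≤ N ↔
      ⁅⁅A.map (QuotientGroup.mk' N), B.map (QuotientGroup.mk' N)⁆,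
        C.map (QuotientGroup.mk' N)⁆ = ⊥ := by
    intro A B C
    rw [← map_commutator, ← map_commutator, map_eq_bot_iff, QuotientGroup.ker_mk']
  rw [hquot] at h1 h2 ⊢
  exact commutator_commutator_eq_bot_of_rotate h1 h2

/-- With Mathlib's `0`-based indexing this is `⁅γ_{m+1}, γ_{n+1}⁆ ≤ γ_{m+n+2}`. -/
theorem commutator_lowerCentralSeries_le (m n : ℕ) :
    ⁅(⊤ : Subgroup G).lowerCentralSeries m, (⊤ : Subgroup G).lowerCentralSeries n⁆ ≤
      (⊤ : Subgroup G).lowerCentralSeries (m + n + 1) := by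
  induction n generalizing m with
  | zero => exact commutator_mono le_rfl le_top
  | succ n ih =>
    rw [lowerCentralSeries_succ, commutator_comm]
    apply commutator_commutator_le_of_rotate
    · calc ⁅⁅⊤, (⊤ : Subgroup G).lowerCentralSeries m⁆, (⊤ : Subgroup G).lowerCentralSeries n⁆
          = ⁅(⊤ : Subgroup G).lowerCentralSeries (m + 1),
              (⊤ : Subgroup G).lowerCentralSeries n⁆ := by
            rw [commutator_comm ⊤, lowerCentralSeries_succ]
        _ ≤ (⊤ : Subgroup G).lowerCentralSeries (m + 1 + n + 1) := ih (m + 1)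
        _ = (⊤ : Subgroup G).lowerCentralSeries (m + (n + 1) + 1) := by
            congr 1; omega
    · exact commutator_mono (ih m) le_top

theorem lowerCentralSeries_le_of_le_lowerCentralSeries {H : Subgroup G} {m : ℕ}
    (hH : H ≤ (⊤ : Subgroup G).lowerCentralSeries m) (c : ℕ) :
    H.lowerCentralSeries c ≤ (⊤ : Subgroup G).lowerCentralSeries ((m + 1) * (c + 1) - 1) := by
  induction c with
  | zero => simpa using hH
  | succ c ih =>
    calc H.lowerCentralSeries (c + 1)
        ≤ ⁅(⊤ : Subgroup G).lowerCentralSeries ((m + 1) * (c + 1) - 1),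
            (⊤ : Subgroup G).lowerCentralSeries m⁆ := commutator_mono ih hH
      _ ≤ (⊤ : Subgroup G).lowerCentralSeries ((m + 1) * (c + 1) - 1 + m + 1) :=
          commutator_lowerCentralSeries_le _ _
      _ = (⊤ : Subgroup G).lowerCentralSeries ((m + 1) * (c + 1 + 1) - 1) := by
          congr 1
          rw [show (m + 1) * (c + 1 + 1) = (m + 1) * (c + 1) + (m + 1) by ring]
          have : 1 ≤ (m + 1) * (c + 1) := Nat.one_le_iff_ne_zero.mpr (by positivity)
          omega

end Subgroup

theorem gammaOf_eq_lowerCentralSeries {G : Type*} [Group G] (H : Subgroup G) (c : ℕ) :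
    gammaOf H c = H.lowerCentralSeries c :=
  Subgroup.top_subtype_lowerCentralSeries H c

theorem foldl_gammaOf_le_lowerCentralSeries {G : Type*} [Group G] (cs : List ℕ)
    {H : Subgroup G} {m : ℕ} (hH : H ≤ (⊤ : Subgroup G).lowerCentralSeries m) :
    cs.foldl (fun H c => gammaOf H c) H ≤
      (⊤ : Subgroup G).lowerCentralSeries ((m + 1) * (cs.map (· + 1)).prod - 1) := by
  induction cs generalizing H m with
  | nil => simpa using hH
  | cons c cs ih =>
    have hc := Subgroup.lowerCentralSeries_le_of_le_lowerCentralSeries hH c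
    rw [← gammaOf_eq_lowerCentralSeries] at hc
    have hpos : 1 ≤ (m + 1) * (c + 1) := Nat.one_le_iff_ne_zero.mpr (by positivity)
    simpa [Nat.sub_add_cancel hpos, mul_assoc] using ih hc

/-- If `F` is a free group and `π = ∏ (c_i + 1)`, then `ρ_t(F) ≤ γ_π(F)`.
Note `γ_π(F) = lowerCentralSeries F (π - 1)`. -/
theorem rho_le_gamma_prod {α : Type*} (cs : List ℕ) :
    rho (FreeGroup α) cs ≤
      (⊤ : Subgroup (FreeGroup α)).lowerCentralSeries ((cs.map (· + 1)).prod - 1) := by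
  simpa [rho] using foldl_gammaOf_le_lowerCentralSeries (m := 0) cs le_top
end
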